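/- Let e and o be two distinct propositional letters and define ψ₁ := (e ∧ (e→e)) → o, ψ₂ := (o ∧ (o→o)) → e, ψ₃ := (e∨o) → ((e∨o) ∧ ((e∨o) → (e∨o))), and ψ_∞ := (o ∧ ψ₁ ∧ ψ₂ ∧ ψ₃) → e. Then ψ_∞ is not valid on some (infinite) semilattice frame, but ψ_∞ is valid on every finite semilattice frame. -/

import Mathlib

/-- Formulas of the language 𝓛: propositional letters (indexed by ℕ) with ∧, ∨, →. -/
inductive Fml : Type
  | atom : ℕ → Fml
  | and : Fml → Fml → Fml
  | or : Fml → Fml → Fml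
  | imp : Fml → Fml → Fml
deriving DecidableEq

/-- Satisfaction in a semilattice model `(S, ⊔, V)`: the implication clause is
`x ⊩ φ → ψ` iff for all `y`, `y ⊩ φ` implies `x ⊔ y ⊩ ψ`. -/
def SatS {S : Type*} (sup : S → S → S) (V : ℕ → Set S) : S → Fml → Prop
  | x, .atom p => x ∈ V p
  | x, .and φ ψ => SatS sup V x φ ∧ SatS sup V x ψ
  | x, .or φ ψ => SatS sup V x φ ∨ SatS sup V x ψ
  | x, .imp φ ψ => ∀ y, SatS sup V y φ → SatS sup V (sup x y) ψ

/-- The semilattice frame conditions on `(S, ⊔, 0)`: commutativity, associativity,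
idempotence and identity. -/
def IsSemilatticeFrame {S : Type*} (sup : S → S → S) (z : S) : Prop :=
  (∀ x y, sup x y = sup y x) ∧
  (∀ x y w, sup (sup x y) w = sup x (sup y w)) ∧
  (∀ x, sup x x = x) ∧
  (∀ x, sup z x = x)

/-- `ψ₁ = (e ∧ (e → e)) → o`. -/
def psi1 (pe po : ℕ) : Fml :=
  .imp (.and (.atom pe) (.imp (.atom pe) (.atom pe))) (.atom po)

/-- `ψ₂ = (o ∧ (o → o)) → e`. -/
def psi2 (pe po : ℕ) : Fml :=
  .imp (.and (.atom po) (.imp (.atom po) (.atom po))) (.atom pe)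

/-- `ψ₃ = (e ∨ o) → ((e ∨ o) ∧ ((e ∨ o) → (e ∨ o)))`. -/
def psi3 (pe po : ℕ) : Fml :=
  .imp (.or (.atom pe) (.atom po))
    (.and (.or (.atom pe) (.atom po))
      (.imp (.or (.atom pe) (.atom po)) (.or (.atom pe) (.atom po))))

/-- `ψ_∞ = (o ∧ ψ₁ ∧ ψ₂ ∧ ψ₃) → e`. -/
def psiInf (pe po : ℕ) : Fml :=
  .imp (.and (.atom po) (.and (psi1 pe po) (.and (psi2 pe po) (psi3 pe po)))) (.atom pe)

/-- `ψ_∞` fails on some (infinite) semilattice frame but is valid on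
every finite semilattice frame. -/
theorem psiInf_infinite_not_finite (pe po : ℕ) (hne : pe ≠ po) :
    (∃ (S : Type) (sup : S → S → S) (z : S), IsSemilatticeFrame sup z ∧
      ∃ V : ℕ → Set S, ¬ SatS sup V z (psiInf pe po)) ∧
    (∀ (S : Type) (sup : S → S → S) (z : S), Finite S → IsSemilatticeFrame sup z →
      ∀ V : ℕ → Set S, SatS sup V z (psiInf pe po)) := by
  classical
  constructor
  · -- infinite countermodel: (Finset ℕ, ∪, ∅)
    refine ⟨Finset ℕ, (· ∪ ·), ∅,
      ⟨fun x y => Finset.union_comm x y, fun x y w => Finset.union_assoc x y w,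
        fun x => Finset.union_self x, fun x => Finset.empty_union x⟩,
      (fun p => {x : Finset ℕ | (p = pe ∧ x.Nonempty ∧ Even x.card) ∨ (p ≠ pe ∧ Odd x.card)}),
      fun h => ?_⟩
    set V : ℕ → Set (Finset ℕ) :=
      fun p => {x : Finset ℕ | (p = pe ∧ x.Nonempty ∧ Even x.card) ∨ (p ≠ pe ∧ Odd x.card)}
      with hVdef
    have hpo : po ≠ pe := Ne.symm hne
    have hVe : ∀ x : Finset ℕ, x ∈ V pe ↔ (x.Nonempty ∧ Even x.card) := by
      intro x; simp [hVdef]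
    have hVo : ∀ x : Finset ℕ, x ∈ V po ↔ Odd x.card := by
      intro x; simp [hVdef, hpo]
    simp only [psiInf, psi1, psi2, psi3, SatS] at h
    have hmain := h {0} ⟨?_, ?_, ?_, ?_⟩
    · -- the conclusion : ∅ ∪ {0} ∈ V pe, which is false
      rw [show (∅ ∪ ({0} : Finset ℕ)) = {0} from Finset.empty_union _] at hmain
      obtain ⟨-, hev⟩ := (hVe _).mp hmain
      simp [Finset.card_singleton] at hev
    · -- {0} ⊩ o
      exact (hVo _).mpr (by simp)
    · -- {0} ⊩ ψ₁
      rintro x ⟨hxe, hxee⟩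
      exfalso
      obtain ⟨⟨a, ha⟩, hxev⟩ := (hVe x).mp hxe
      obtain ⟨b, hb⟩ := Infinite.exists_notMem_finset x
      have hab : a ≠ b := fun hEq => hb (hEq ▸ ha)
      have hy : ({a, b} : Finset ℕ) ∈ V pe := by
        refine (hVe _).mpr ⟨⟨a, by simp⟩, ?_⟩
        rw [Finset.card_insert_of_notMem (by simp [hab]), Finset.card_singleton]
        exact ⟨1, rfl⟩
      have hres := (hVe _).mp (hxee {a, b} hy)
      have hxab : x ∪ {a, b} = insert b x := by
        ext c
        simp only [Finset.mem_union, Finset.mem_insert, Finset.mem_singleton]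
        constructor
        · rintro (hc | rfl | rfl)
          · exact Or.inr hc
          · exact Or.inr ha
          · exact Or.inl rfl
        · rintro (rfl | hc)
          · exact Or.inr (Or.inr rfl)
          · exact Or.inl hc
      rw [hxab, Finset.card_insert_of_notMem hb] at hres
      obtain ⟨-, k, hk⟩ := hres
      obtain ⟨j, hj⟩ := hxev
      omega
    · -- {0} ⊩ ψ₂
      rintro x ⟨hxo, hxoo⟩
      exfalso
      obtain ⟨j, hj⟩ := (hVo x).mp hxo
      obtain ⟨b, hb⟩ := Infinite.exists_notMem_finset x
      have hy : ({b} : Finset ℕ) ∈ V po := (hVo _).mpr (by simp)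
      have hres := (hVo _).mp (hxoo {b} hy)
      have hxb : x ∪ {b} = insert b x := by
        ext c
        simp only [Finset.mem_union, Finset.mem_singleton, Finset.mem_insert]
        tauto
      rw [hxb, Finset.card_insert_of_notMem hb] at hres
      obtain ⟨k, hk⟩ := hres
      omega
    · -- {0} ⊩ ψ₃
      have hEO : ∀ s : Finset ℕ, s.Nonempty → (s ∈ V pe ∨ s ∈ V po) := by
        intro s hs
        rcases Nat.even_or_odd s.card with hc | hc
        · exact Or.inl ((hVe s).mpr ⟨hs, hc⟩)
        · exact Or.inr ((hVo s).mpr hc)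
      intro x hx
      have hxne : x.Nonempty := by
        rcases hx with hx | hx
        · exact ((hVe x).mp hx).1
        · obtain ⟨k, hk⟩ := (hVo x).mp hx
          exact Finset.card_pos.mp (by omega)
      refine ⟨hEO _ ⟨0, by simp⟩, fun y hy => hEO _ ⟨0, by simp⟩⟩
  · -- validity on finite frames
    intro S sup z hfin hframe V
    obtain ⟨hc, ha, hi, hz⟩ := hframe
    by_contra hcon
    simp only [psiInf, psi1, psi2, psi3, SatS] at hcon
    push_neg at hcon
    obtain ⟨w, ⟨hwo, h1, h2, h3⟩, hwe⟩ := hcon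
    rw [hz w] at hwe
    letI : PartialOrder S :=
      { le := fun x y => sup x y = y
        le_refl := hi
        le_trans := fun a b c hab hbc => by
          show sup a c = c
          calc sup a c = sup a (sup b c) := by rw [hbc]
            _ = sup (sup a b) c := (ha a b c).symm
            _ = sup b c := by rw [hab]
            _ = c := hbc
        le_antisymm := fun a b hab hba => by
          exact hba.symm.trans ((hc b a).trans hab) }
    have stepO : ∀ x : S, sup w x = x → x ∈ V po → x ∉ V pe →
        ∃ x', sup w x' = x' ∧ x ≤ x' ∧ x ≠ x' ∧ x' ∈ V pe ∧ x' ∉ V po := by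
      intro x hwx hxo hxe
      have hnoo : ¬ ∀ u, u ∈ V po → sup x u ∈ V po := by
        intro hoo
        exact hxe (by have := h2 x ⟨hxo, hoo⟩; rwa [hwx] at this)
      push_neg at hnoo
      obtain ⟨u, hu, hxu⟩ := hnoo
      have h3x := (h3 x (Or.inr hxo)).2
      rw [hwx] at h3x
      have heo := h3x u (Or.inr hu)
      refine ⟨sup x u, by rw [← ha, hwx], ?_, ?_, heo.resolve_right hxu, hxu⟩
      · show sup x (sup x u) = sup x u
        rw [← ha, hi]
      · intro hEq; exact hxu (hEq ▸ hxo)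
    have stepE : ∀ x : S, sup w x = x → x ∈ V pe → x ∉ V po →
        ∃ x', sup w x' = x' ∧ x ≤ x' ∧ x ≠ x' ∧ x' ∈ V po ∧ x' ∉ V pe := by
      intro x hwx hxe hxo
      have hnee : ¬ ∀ u, u ∈ V pe → sup x u ∈ V pe := by
        intro hee
        exact hxo (by have := h1 x ⟨hxe, hee⟩; rwa [hwx] at this)
      push_neg at hnee
      obtain ⟨u, hu, hxu⟩ := hnee
      have h3x := (h3 x (Or.inl hxe)).2
      rw [hwx] at h3x
      have heo := h3x u (Or.inl hu)
      refine ⟨sup x u, by rw [← ha, hwx], ?_, ?_, heo.resolve_left hxu, hxu⟩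
      · show sup x (sup x u) = sup x u
        rw [← ha, hi]
      · intro hEq; exact hxu (hEq ▸ hxe)
    set T : Set S := {x | sup w x = x ∧ x ∈ V po ∧ x ∉ V pe} with hT
    obtain ⟨a, ⟨haw, hao, hae⟩, hmax⟩ :=
      Set.Finite.exists_maximalFor id T (Set.toFinite T) ⟨w, hi w, hwo, hwe⟩
    obtain ⟨b, hbw, hab, hab', hbe, hbo⟩ := stepO a haw hao hae
    obtain ⟨c, hcw, hbc, hbc', hco, hce⟩ := stepE b hbw hbe hbo
    have hcT : c ∈ T := ⟨hcw, hco, hce⟩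
    have hac : a = c := le_antisymm (le_trans hab hbc) (hmax hcT (le_trans hab hbc))
    have hba : b ≤ a := by rw [hac]; exact hbc
    exact hab' (le_antisymm hba hab).symm
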